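/- arXiv:1107.3613 — 2 statements merged into one kernel-verified Lean document; each statement's English description precedes it below -/
import Mathlib

section
/- Let ℓ > 2 be an integer and let μ be a partition that has a vertical (resp. horizontal) ℓ-rim hook R such that the partition μ∖R has a horizontal (resp. vertical) ℓ-rim hook S adjacent to R. Then μ is not an (ℓ,0)-JM partition. -/
/-- Hook length of the box in row `a`, column `b` (0-indexed) of a Young diagram:
the number of boxes `(a, b')` with `b' ≥ b` plus the number of boxes `(a', b)` with `a' > a`. -/
def YoungDiagram.hook (μ : YoungDiagram) (a b : ℕ) : ℕ :=
  (μ.rowLen a - b) + (μ.colLen b - (a + 1))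

/-- `μ` is an `(ℓ,0)`-JM partition: there do not exist boxes `(a,b)`, `(a,y)`, `(x,b)` of `μ`
with `ℓ ∣ h_{(a,b)}`, `ℓ ∤ h_{(a,y)}` and `ℓ ∤ h_{(x,b)}`. -/
def IsJM (ℓ : ℕ) (μ : YoungDiagram) : Prop :=
  ¬ ∃ a b y x : ℕ, (a, b) ∈ μ ∧ (a, y) ∈ μ ∧ (x, b) ∈ μ ∧
      ℓ ∣ μ.hook a b ∧ ¬ ℓ ∣ μ.hook a y ∧ ¬ ℓ ∣ μ.hook x b


/-- Two boxes are adjacent if they share an edge. -/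
def CellAdj (u v : ℕ × ℕ) : Prop :=
  (u.1 = v.1 ∧ (u.2 + 1 = v.2 ∨ v.2 + 1 = u.2)) ∨
  (u.2 = v.2 ∧ (u.1 + 1 = v.1 ∨ v.1 + 1 = u.1))

/-- A set of boxes is connected if any two of its boxes are joined by a chain of boxes of the
set, successive boxes sharing an edge. -/
def ConnectedSet (R : Finset (ℕ × ℕ)) : Prop :=
  ∀ u ∈ R, ∀ v ∈ R,
    Relation.ReflTransGen (fun x y : ℕ × ℕ => x ∈ R ∧ y ∈ R ∧ CellAdj x y) u v

/-- A set of boxes contains no 2×2 square. -/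
def NoSquare (R : Finset (ℕ × ℕ)) : Prop :=
  ¬ ∃ i j : ℕ, (i, j) ∈ R ∧ (i + 1, j) ∈ R ∧ (i, j + 1) ∈ R ∧ (i + 1, j + 1) ∈ R

/-- `R` is an `ℓ`-rim hook of `μ`: a connected set of `ℓ` boxes of `μ` with no 2×2 square,
whose removal from `μ` leaves the Young diagram of a partition. -/
def IsRimHook (ℓ : ℕ) (μ : YoungDiagram) (R : Finset (ℕ × ℕ)) : Prop :=
  R ⊆ μ.cells ∧ R.card = ℓ ∧ (∃ ν : YoungDiagram, ν.cells = μ.cells \ R) ∧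
    ConnectedSet R ∧ NoSquare R

/-- A set of boxes all lying in one row. -/
def Horizontal (R : Finset (ℕ × ℕ)) : Prop := ∃ r : ℕ, ∀ c ∈ R, c.1 = r

/-- A set of boxes all lying in one column. -/
def Vertical (R : Finset (ℕ × ℕ)) : Prop := ∃ r : ℕ, ∀ c ∈ R, c.2 = r

/-- Two sets of boxes are adjacent if some box of one shares an edge with some box of the
other. -/
def AdjSets (R S : Finset (ℕ × ℕ)) : Prop := ∃ u ∈ R, ∃ v ∈ S, CellAdj u v


/-!
Let the vertical hook `R` occupy rows `a, …, a+ℓ-1` of column `c`, so that these rows of `μ` end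
in column `c`. A horizontal hook `S` of `μ ∖ R` adjacent to `R` cannot lie right of or below `R`.
Either it ends just left of the bottom box of `R`, and then columns `c-1` and `c` of `μ` both end
in row `a+ℓ-1`; or it starts just above the top box of `R`, and then the box `(a-1, c)` has hook
length `2ℓ`. In both pictures a box with hook length divisible by `ℓ` has, in its row and in its
column, boxes with hook lengths `ℓ ± 1` and `ℓ - 1`. Transposing handles a horizontal `R` with a
vertical `S`.
-/

open YoungDiagram

namespace YoungDiagram

variable {μ ν : YoungDiagram} {R : Finset (ℕ × ℕ)}

theorem mem_iff_of_cells_eq_sdiff (hν : ν.cells = μ.cells \ R) {p : ℕ × ℕ} :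
    p ∈ ν ↔ p ∈ μ ∧ p ∉ R := by
  rw [← mem_cells, hν, Finset.mem_sdiff, mem_cells]

theorem colLen_eq_of_cells_eq_sdiff (hν : ν.cells = μ.cells \ R) {j : ℕ}
    (hj : ∀ p ∈ R, p.2 ≠ j) : ν.colLen j = μ.colLen j :=
  eq_of_forall_lt_iff fun i => by
    rw [← mem_iff_lt_colLen, ← mem_iff_lt_colLen, mem_iff_of_cells_eq_sdiff hν]
    exact and_iff_left fun hi => hj _ hi rfl

theorem rowLen_eq_of_cells_eq_sdiff (hν : ν.cells = μ.cells \ R) {i : ℕ}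
    (hi : ∀ p ∈ R, p.1 ≠ i) : ν.rowLen i = μ.rowLen i :=
  eq_of_forall_lt_iff fun j => by
    rw [← mem_iff_lt_rowLen, ← mem_iff_lt_rowLen, mem_iff_of_cells_eq_sdiff hν]
    exact and_iff_left fun hj => hi _ hj rfl

variable {c : ℕ}

theorem mem_iff_of_vertical (hRμ : R ⊆ μ.cells) (hν : ν.cells = μ.cells \ R)
    (hc : ∀ p ∈ R, p.2 = c) {p : ℕ × ℕ} :
    p ∈ R ↔ p.2 = c ∧ ν.colLen c ≤ p.1 ∧ p.1 < μ.colLen c := by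
  obtain ⟨i, j⟩ := p
  constructor
  · intro hp
    obtain rfl : j = c := hc _ hp
    refine ⟨rfl, not_lt.1 fun hν' => ?_, mem_iff_lt_colLen.1 ((mem_cells _).1 (hRμ hp))⟩
    exact ((mem_iff_of_cells_eq_sdiff hν).1 (mem_iff_lt_colLen.2 hν')).2 hp
  · rintro ⟨rfl, hνi, hμi⟩
    by_contra hp
    have := mem_iff_lt_colLen.1 ((mem_iff_of_cells_eq_sdiff hν).2 ⟨mem_iff_lt_colLen.2 hμi, hp⟩)
    omega

theorem card_eq_of_vertical (hRμ : R ⊆ μ.cells) (hν : ν.cells = μ.cells \ R)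
    (hc : ∀ p ∈ R, p.2 = c) : R.card = μ.colLen c - ν.colLen c := by
  have hR : R = Finset.Ico (ν.colLen c) (μ.colLen c) ×ˢ {c} := by
    ext ⟨i, j⟩
    rw [mem_iff_of_vertical hRμ hν hc, Finset.mem_product, Finset.mem_Ico,
      Finset.mem_singleton]
    exact and_comm
  rw [hR, Finset.card_product, Finset.card_singleton, mul_one, Nat.card_Ico]

theorem notMem_of_mem_of_le (hν : ν.cells = μ.cells \ R) {p q : ℕ × ℕ} (hp : p ∈ R)
    (hpq : p ≤ q) : q ∉ ν := fun hq =>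
  ((mem_iff_of_cells_eq_sdiff hν).1 (ν.isLowerSet hpq hq)).2 hp

theorem rowLen_eq_of_vertical (hν : ν.cells = μ.cells \ R) (hc : ∀ p ∈ R, p.2 = c) {i : ℕ}
    (hνi : ν.colLen c ≤ i) (hμi : i < μ.colLen c) : μ.rowLen i = c + 1 := by
  have hci : c < μ.rowLen i := mem_iff_lt_rowLen.1 (mem_iff_lt_colLen.2 hμi)
  suffices (i, c + 1) ∉ μ by rw [mem_iff_lt_rowLen] at this; omega
  intro hμ
  have hν' : (i, c + 1) ∈ ν :=
    (mem_iff_of_cells_eq_sdiff hν).2 ⟨hμ, fun hR => by simpa using hc _ hR⟩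
  have := mem_iff_lt_colLen.1 (ν.up_left_mem le_rfl c.le_succ hν')
  omega

end YoungDiagram

section Transpose

def swapCells (R : Finset (ℕ × ℕ)) : Finset (ℕ × ℕ) :=
  R.map (Equiv.prodComm ℕ ℕ).toEmbedding

variable {R S : Finset (ℕ × ℕ)}

@[simp]
theorem mem_swapCells {p : ℕ × ℕ} : p ∈ swapCells R ↔ p.swap ∈ R :=
  Finset.mem_map_equiv

@[simp]
theorem card_swapCells : (swapCells R).card = R.card :=
  Finset.card_map _

theorem CellAdj.swap {u v : ℕ × ℕ} (h : CellAdj u v) : CellAdj u.swap v.swap := by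
  unfold CellAdj at *
  simp only [Prod.fst_swap, Prod.snd_swap]
  tauto

theorem Horizontal.swapCells (h : Horizontal R) : Vertical (swapCells R) :=
  let ⟨r, hr⟩ := h
  ⟨r, fun _ hp => hr _ (mem_swapCells.1 hp)⟩

theorem Vertical.swapCells (h : Vertical R) : Horizontal (swapCells R) :=
  let ⟨c, hc⟩ := h
  ⟨c, fun _ hp => hc _ (mem_swapCells.1 hp)⟩

theorem AdjSets.swapCells (h : AdjSets R S) : AdjSets (swapCells R) (swapCells S) :=
  let ⟨u, hu, v, hv, huv⟩ := h
  ⟨u.swap, by simpa using hu, v.swap, by simpa using hv, huv.swap⟩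

namespace YoungDiagram

variable {μ ν : YoungDiagram}

theorem swapCells_subset_transpose_cells (h : R ⊆ μ.cells) :
    swapCells R ⊆ μ.transpose.cells := fun p hp => by
  simpa using h (mem_swapCells.1 hp)

theorem transpose_cells_eq_sdiff (hν : ν.cells = μ.cells \ R) :
    ν.transpose.cells = μ.transpose.cells \ swapCells R := by
  ext p
  rw [mem_cells, mem_transpose, mem_iff_of_cells_eq_sdiff hν, Finset.mem_sdiff, mem_cells,
    mem_transpose, mem_swapCells]

theorem hook_transpose {a b : ℕ} (h : (a, b) ∈ μ) : μ.transpose.hook b a = μ.hook a b := by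
  have hb := mem_iff_lt_rowLen.1 h
  have ha := mem_iff_lt_colLen.1 h
  simp only [hook, rowLen_transpose, colLen_transpose]
  omega

variable {r : ℕ}

theorem mem_iff_of_horizontal (hRμ : R ⊆ μ.cells) (hν : ν.cells = μ.cells \ R)
    (hr : ∀ p ∈ R, p.1 = r) {p : ℕ × ℕ} :
    p ∈ R ↔ p.1 = r ∧ ν.rowLen r ≤ p.2 ∧ p.2 < μ.rowLen r := by
  simpa using mem_iff_of_vertical (swapCells_subset_transpose_cells hRμ)
    (transpose_cells_eq_sdiff hν) (fun q hq => hr _ (mem_swapCells.1 hq)) (p := p.swap)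

theorem card_eq_of_horizontal (hRμ : R ⊆ μ.cells) (hν : ν.cells = μ.cells \ R)
    (hr : ∀ p ∈ R, p.1 = r) : R.card = μ.rowLen r - ν.rowLen r := by
  simpa using card_eq_of_vertical (swapCells_subset_transpose_cells hRμ)
    (transpose_cells_eq_sdiff hν) (fun q hq => hr _ (mem_swapCells.1 hq))

theorem colLen_eq_of_horizontal (hν : ν.cells = μ.cells \ R) (hr : ∀ p ∈ R, p.1 = r) {j : ℕ}
    (hνj : ν.rowLen r ≤ j) (hμj : j < μ.rowLen r) : μ.colLen j = r + 1 := by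
  simpa using rowLen_eq_of_vertical (transpose_cells_eq_sdiff hν)
    (fun q hq => hr _ (mem_swapCells.1 hq)) (i := j) (by simpa using hνj) (by simpa using hμj)

end YoungDiagram

theorem IsJM.transpose {ℓ : ℕ} {μ : YoungDiagram} (h : IsJM ℓ μ) : IsJM ℓ μ.transpose := by
  rintro ⟨a, b, y, x, hab, hay, hxb, hdvd, hy, hx⟩
  rw [mem_transpose] at hab hay hxb
  rw [hook_transpose hab] at hdvd
  rw [hook_transpose hay] at hy
  rw [hook_transpose hxb] at hx
  exact h ⟨b, a, x, y, hab, hxb, hay, hdvd, hx, hy⟩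

end Transpose

section HookWitnesses

variable {ℓ : ℕ} {μ : YoungDiagram}

/-- The hook lengths at `(a, c+1)`, `(a, c)` and `(a+1, c+1)` are `ℓ`, `ℓ+1` and `ℓ-1`. -/
theorem not_isJM_of_two_equal_columns (hℓ : 2 ≤ ℓ) {a c : ℕ}
    (hrow : μ.rowLen a = c + 2) (hrow' : μ.rowLen (a + 1) = c + 2)
    (hcol : μ.colLen c = a + ℓ) (hcol' : μ.colLen (c + 1) = a + ℓ) : ¬ IsJM ℓ μ := by
  have hook_corner : μ.hook a (c + 1) = ℓ := by simp only [hook, hrow, hcol']; omega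
  have hook_left : μ.hook a c = ℓ + 1 := by simp only [hook, hrow, hcol]; omega
  have hook_below : μ.hook (a + 1) (c + 1) = ℓ - 1 := by simp only [hook, hrow', hcol']; omega
  refine fun hJM => hJM ⟨a, c + 1, c, a + 1, ?_, ?_, ?_, ?_, ?_, ?_⟩
  · exact mem_iff_lt_colLen.2 (by omega)
  · exact mem_iff_lt_colLen.2 (by omega)
  · exact mem_iff_lt_colLen.2 (by omega)
  · exact hook_corner ▸ dvd_rfl
  · rw [hook_left, Nat.dvd_add_self_left]
    exact Nat.not_dvd_of_pos_of_lt one_pos (by omega)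
  · rw [hook_below]
    exact Nat.not_dvd_of_pos_of_lt (by omega) (by omega)

/-- The hook lengths at `(r, c)`, `(r, c+1)` and `(r+2, c)` are `2ℓ`, `ℓ-1` and `ℓ-1`. -/
theorem not_isJM_of_hook_eq_two_mul (hℓ : 2 ≤ ℓ) {r c : ℕ}
    (hrow : μ.rowLen r = c + ℓ) (hrow' : μ.rowLen (r + 2) = c + 1)
    (hcol : μ.colLen c = r + 1 + ℓ) (hcol' : μ.colLen (c + 1) = r + 1) : ¬ IsJM ℓ μ := by
  have hook_corner : μ.hook r c = 2 * ℓ := by simp only [hook, hrow, hcol]; omega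
  have hook_right : μ.hook r (c + 1) = ℓ - 1 := by simp only [hook, hrow, hcol']; omega
  have hook_below : μ.hook (r + 2) c = ℓ - 1 := by simp only [hook, hrow', hcol]; omega
  refine fun hJM => hJM ⟨r, c, c + 1, r + 2, ?_, ?_, ?_, ?_, ?_, ?_⟩
  · exact mem_iff_lt_colLen.2 (by omega)
  · exact mem_iff_lt_colLen.2 (by omega)
  · exact mem_iff_lt_colLen.2 (by omega)
  · exact hook_corner ▸ dvd_mul_left ℓ 2
  · rw [hook_right]
    exact Nat.not_dvd_of_pos_of_lt (by omega) (by omega)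
  · rw [hook_below]
    exact Nat.not_dvd_of_pos_of_lt (by omega) (by omega)

end HookWitnesses

section AdjacentHooks

variable {ℓ : ℕ} {μ ν ρ : YoungDiagram} {R S : Finset (ℕ × ℕ)}

theorem not_isJM_of_left_adjacent (hℓ : 2 ≤ ℓ) (hRμ : R ⊆ μ.cells) (hRcard : R.card = ℓ)
    (hν : ν.cells = μ.cells \ R) (hSν : S ⊆ ν.cells) (hρ : ρ.cells = ν.cells \ S) {r c : ℕ}
    (hc : ∀ p ∈ R, p.2 = c + 1) (hr : ∀ p ∈ S, p.1 = r) (hu : (r, c + 1) ∈ R)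
    (hv : (r, c) ∈ S) : ¬ IsJM ℓ μ := by
  set a := ν.colLen (c + 1)
  have hcolR : μ.colLen (c + 1) = a + ℓ := by
    have := card_eq_of_vertical hRμ hν hc
    omega
  obtain ⟨-, har, hra⟩ := (mem_iff_of_vertical hRμ hν hc).1 hu
  obtain ⟨-, hdc, hcd⟩ := (mem_iff_of_horizontal hSν hρ hr).1 hv
  have hcolS : μ.colLen c = r + 1 := by
    rw [← colLen_eq_of_cells_eq_sdiff hν fun p hp => by rw [hc p hp]; omega]
    exact colLen_eq_of_horizontal hρ hr hdc hcd
  have := μ.colLen_anti c (c + 1) c.le_succ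
  exact not_isJM_of_two_equal_columns hℓ (rowLen_eq_of_vertical hν hc le_rfl (by omega))
    (rowLen_eq_of_vertical hν hc (by omega) (by omega)) (by omega) hcolR

theorem not_isJM_of_above_adjacent (hℓ : 2 ≤ ℓ) (hRμ : R ⊆ μ.cells) (hRcard : R.card = ℓ)
    (hν : ν.cells = μ.cells \ R) (hSν : S ⊆ ν.cells) (hScard : S.card = ℓ)
    (hρ : ρ.cells = ν.cells \ S) {r c : ℕ} (hc : ∀ p ∈ R, p.2 = c) (hr : ∀ p ∈ S, p.1 = r)
    (hu : (r + 1, c) ∈ R) (hv : (r, c) ∈ S) : ¬ IsJM ℓ μ := by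
  set a := ν.colLen c
  set d := ρ.rowLen r
  have hcolR : μ.colLen c = a + ℓ := by
    have := card_eq_of_vertical hRμ hν hc
    omega
  have hrowS : ν.rowLen r = d + ℓ := by
    have := card_eq_of_horizontal hSν hρ hr
    omega
  have ha : a = r + 1 := by
    have := ((mem_iff_of_vertical hRμ hν hc).1 hu).2.1
    have := mem_iff_lt_colLen.1 ((mem_cells _).1 (hSν hv))
    omega
  obtain ⟨-, hdc, hcd⟩ := (mem_iff_of_horizontal hSν hρ hr).1 hv
  have hcolS : ∀ y ≠ c, d ≤ y → y < d + ℓ → μ.colLen y = r + 1 := fun y hyc h₁ h₂ => by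
    rw [← colLen_eq_of_cells_eq_sdiff hν fun p hp => (hc p hp).trans_ne hyc.symm]
    exact colLen_eq_of_horizontal hρ hr h₁ (by omega)
  -- a column `d < c` below `S` would be shorter than column `c`
  obtain rfl : d = c := by
    by_contra hdc'
    have := μ.colLen_anti d c hdc
    have := hcolS d hdc' le_rfl (by omega)
    omega
  have hrow : μ.rowLen r = d + ℓ := by
    rw [← hrowS, rowLen_eq_of_cells_eq_sdiff hν fun p hp => ?_]
    have := ((mem_iff_of_vertical hRμ hν hc).1 hp).2.1
    omega
  exact not_isJM_of_hook_eq_two_mul hℓ hrow (rowLen_eq_of_vertical hν hc (by omega) (by omega))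
    (by omega) (hcolS (d + 1) (by omega) (by omega) (by omega))

theorem not_isJM_of_vertical_of_horizontal (hℓ : 2 ≤ ℓ) (hRμ : R ⊆ μ.cells)
    (hRcard : R.card = ℓ) (hν : ν.cells = μ.cells \ R) (hSν : S ⊆ ν.cells)
    (hScard : S.card = ℓ) (hρ : ρ.cells = ν.cells \ S) (hV : Vertical R) (hH : Horizontal S)
    (hadj : AdjSets R S) : ¬ IsJM ℓ μ := by
  obtain ⟨c, hc⟩ := hV
  obtain ⟨r, hr⟩ := hH
  obtain ⟨⟨i, j⟩, hu, ⟨i', j'⟩, hv, huv⟩ := hadj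
  have hvν : (i', j') ∈ ν := (mem_cells _).1 (hSν hv)
  obtain rfl : c = j := (hc _ hu).symm
  obtain rfl : r = i' := (hr _ hv).symm
  simp only [CellAdj] at huv
  rcases huv with ⟨rfl, hcj | hjc⟩ | ⟨rfl, hir | hri⟩
  · exact absurd hvν (notMem_of_mem_of_le hν hu (Prod.mk_le_mk.2 ⟨le_rfl, by omega⟩))
  · subst hjc
    exact not_isJM_of_left_adjacent hℓ hRμ hRcard hν hSν hρ hc hr hu hv
  · exact absurd hvν (notMem_of_mem_of_le hν hu (Prod.mk_le_mk.2 ⟨by omega, le_rfl⟩))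
  · subst hri
    exact not_isJM_of_above_adjacent hℓ hRμ hRcard hν hSν hScard hρ hc hr hu hv

end AdjacentHooks

/-- If `μ` has a vertical (resp. horizontal) `ℓ`-rim hook `R` such that `μ∖R` has a horizontal
(resp. vertical) `ℓ`-rim hook `S` adjacent to `R`, then `μ` is not an `(ℓ,0)`-JM partition. -/
theorem not_JM_of_adjacent_rim_hooks (ℓ : ℕ) (hℓ : 2 < ℓ) (mu mu' : YoungDiagram)
    (R S : Finset (ℕ × ℕ))
    (hR : IsRimHook ℓ mu R) (hmu' : mu'.cells = mu.cells \ R)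
    (hS : IsRimHook ℓ mu' S)
    (hVH : (Vertical R ∧ Horizontal S) ∨ (Horizontal R ∧ Vertical S))
    (hadj : AdjSets R S) :
    ¬ IsJM ℓ mu := by
  obtain ⟨hRmu, hRcard, -⟩ := hR
  obtain ⟨hSmu', hScard, ⟨ρ, hρ⟩, -⟩ := hS
  rcases hVH with ⟨hV, hH⟩ | ⟨hH, hV⟩
  · exact not_isJM_of_vertical_of_horizontal hℓ.le hRmu hRcard hmu' hSmu' hScard hρ hV hH hadj
  · exact fun hJM => not_isJM_of_vertical_of_horizontal hℓ.le
      (swapCells_subset_transpose_cells hRmu) (card_swapCells.trans hRcard)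
      (transpose_cells_eq_sdiff hmu') (swapCells_subset_transpose_cells hSmu')
      (card_swapCells.trans hScard) (transpose_cells_eq_sdiff hρ) hH.swapCells hV.swapCells
      hadj.swapCells hJM.transpose
end

section
/- Let ℓ > 2 be an integer and let λ be an (ℓ,0)-JM partition. Then there do not exist a removable box (a,b) of λ and an addable box (c,d) of λ lying on the same ladder with (a,b) above (c,d), i.e. with c − a = (ℓ−1)(b − d) and a < c. -/
/-- `c` is a removable box of `μ`. -/
def Removable (μ : YoungDiagram) (c : ℕ × ℕ) : Prop :=
  c ∈ μ ∧ ∃ ν : YoungDiagram, ν.cells = μ.cells \ {c}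

/-- `c` is an addable box of `μ`. -/
def Addable (μ : YoungDiagram) (c : ℕ × ℕ) : Prop :=
  c ∉ μ ∧ ∃ ν : YoungDiagram, ν.cells = insert c μ.cells

namespace YoungDiagram

variable {μ : YoungDiagram}

theorem hook_pos {i j : ℕ} (h : (i, j) ∈ μ) : 0 < μ.hook i j := by
  have := mem_iff_lt_rowLen.1 h
  unfold hook
  omega

theorem hook_succ_lt {i j : ℕ} (h : (i + 1, j) ∈ μ) : μ.hook (i + 1) j < μ.hook i j := by
  have hrow := μ.rowLen_anti i (i + 1) i.le_succ
  have hcol := mem_iff_lt_colLen.1 h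
  unfold hook
  omega

theorem mul_colLen_sub_le_hook {ℓ i j : ℕ} (hdvd : ∀ i, (i, j) ∈ μ → ℓ ∣ μ.hook i j)
    (hi : (i, j) ∈ μ) : ℓ * (μ.colLen j - i) ≤ μ.hook i j := by
  induction hn : μ.colLen j - i generalizing i with
  | zero => simp
  | succ n ih =>
    rcases Nat.eq_zero_or_pos n with rfl | hn0
    · simpa using Nat.le_of_dvd (hook_pos hi) (hdvd i hi)
    have hi' : (i + 1, j) ∈ μ := mem_iff_lt_colLen.2 (by omega)
    have hbelow := ih hi' (by omega)
    have hlt := hook_succ_lt hi'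
    exact Nat.le_of_lt_add_of_dvd (by rw [mul_add_one]; omega) (dvd_mul_right ℓ _)
      (hdvd i hi)

end YoungDiagram

open YoungDiagram

theorem Removable.eq_of_le {μ : YoungDiagram} {c p : ℕ × ℕ} (hc : Removable μ c) (hp : p ∈ μ)
    (hcp : c ≤ p) : p = c := by
  obtain ⟨-, ν, hν⟩ := hc
  have hmem : ∀ q, q ∈ ν ↔ q ∈ μ ∧ q ≠ c := fun q => by
    rw [← mem_cells, hν, Finset.mem_sdiff, Finset.mem_singleton, mem_cells]
  by_contra hne
  exact ((hmem c).1 (ν.up_left_mem hcp.1 hcp.2 ((hmem p).2 ⟨hp, hne⟩))).2 rfl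

theorem Removable.rowLen_eq {μ : YoungDiagram} {i j : ℕ} (h : Removable μ (i, j)) :
    μ.rowLen i = j + 1 := by
  have hlt := mem_iff_lt_rowLen.1 h.1
  have hnext : (i, j + 1) ∉ μ := fun hm => by simpa using h.eq_of_le hm (by simp)
  rw [mem_iff_lt_rowLen] at hnext
  omega

theorem Removable.colLen_eq {μ : YoungDiagram} {i j : ℕ} (h : Removable μ (i, j)) :
    μ.colLen j = i + 1 := by
  have hlt := mem_iff_lt_colLen.1 h.1
  have hnext : (i + 1, j) ∉ μ := fun hm => by simpa using h.eq_of_le hm (by simp)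
  rw [mem_iff_lt_colLen] at hnext
  omega

theorem Removable.hook_eq_one {μ : YoungDiagram} {i j : ℕ} (h : Removable μ (i, j)) :
    μ.hook i j = 1 := by
  unfold hook
  rw [h.rowLen_eq, h.colLen_eq]
  omega

theorem Addable.colLen_eq {μ : YoungDiagram} {i j : ℕ} (h : Addable μ (i, j)) :
    μ.colLen j = i := by
  obtain ⟨hij, ν, hν⟩ := h
  have hle : μ.colLen j ≤ i := not_lt.1 (mt mem_iff_lt_colLen.2 hij)
  rcases Nat.eq_zero_or_pos i with rfl | hi
  · omega
  have habove : (i - 1, j) ∈ ν := ν.up_left_mem (Nat.sub_le i 1) le_rfl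
    (by rw [← mem_cells, hν]; exact Finset.mem_insert_self _ _)
  rw [← mem_cells, hν, Finset.mem_insert, Prod.mk.injEq, mem_cells] at habove
  have := mem_iff_lt_colLen.1 (habove.resolve_left (by omega))
  omega

theorem IsJM.dvd_hook_of_mem_col {ℓ : ℕ} {μ : YoungDiagram} (hJM : IsJM ℓ μ) {a b d x : ℕ}
    (hab : (a, b) ∈ μ) (hndvd : ¬ ℓ ∣ μ.hook a b) (had : (a, d) ∈ μ) (hdvd : ℓ ∣ μ.hook a d)
    (hxd : (x, d) ∈ μ) : ℓ ∣ μ.hook x d :=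
  by_contra fun hx => hJM ⟨a, d, b, x, had, hab, hxd, hdvd, hndvd, hx⟩

/-- An `(ℓ,0)`-JM partition has no ladder with a removable box above an addable box:
there are no removable `(a,b)` and addable `(c,d)` with `c − a = (ℓ−1)(b − d)` and `a < c`. -/
theorem JM_no_removable_above_addable_in_ladder (ℓ : ℕ) (hℓ : 2 < ℓ) (lam : YoungDiagram)
    (h : IsJM ℓ lam) :
    ¬ ∃ a b c d : ℕ, Removable lam (a, b) ∧ Addable lam (c, d) ∧
        (c : ℤ) - a = ((ℓ : ℤ) - 1) * ((b : ℤ) - d) ∧ a < c := by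
  rintro ⟨a, b, c, d, hrem, hadd, hlad, hac⟩
  have hcol := hadd.colLen_eq
  have hrow := hrem.rowLen_eq
  have hdb : d < b := by
    have : (0 : ℤ) < ((ℓ : ℤ) - 1) * ((b : ℤ) - d) := by omega
    have := pos_of_mul_pos_right this (by omega)
    omega
  have had : (a, d) ∈ lam := mem_iff_lt_colLen.2 (by omega)
  have hook_ad : lam.hook a d = ℓ * (b - d) := by
    unfold hook
    rw [hrow, hcol]
    zify [hdb.le, hdb.le.trans b.le_succ, show a + 1 ≤ c from hac]
    linear_combination hlad
  have hdvd : ∀ x, (x, d) ∈ lam → ℓ ∣ lam.hook x d := fun x =>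
    h.dvd_hook_of_mem_col hrem.1 (by rw [hrem.hook_eq_one, Nat.dvd_one]; omega) had
      (hook_ad ▸ dvd_mul_right ℓ _)
  have hbound := mul_colLen_sub_le_hook hdvd had
  rw [hook_ad, hcol] at hbound
  have hlen : c - a ≤ b - d := Nat.le_of_mul_le_mul_left hbound (by omega)
  zify [hdb.le, hac.le] at hlen
  nlinarith
end
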